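/- Let V be a grading-restricted vertex algebra, u, v ∈ V, and i, k, l ∈ ℤ with i, k, l ≥ 1. Define w = ∑_{m=0}^{i} C(−k+i−l−1, m) Res_x x^{−k+i−l−m−1} (1+x)^l Y((1+x)^{L(0)} u, x) v, so that [u]_{ki} ⋄ [v]_{il} = [w]_{kl}. Then [u]_{k−1,i−1} ⋄ [v]_{i−1,l−1} − [w]_{k−1,l−1} ∈ O^∞_∘(V). -/

import Mathlib

noncomputable section

open scoped BigOperators

/-- The generalized binomial coefficient `C(m, k)` for `m : ℤ`, as a complex number. -/
def cchoose (m : ℤ) (k : ℕ) : ℂ :=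
  (∏ i ∈ Finset.range k, ((m : ℂ) - (i : ℂ))) / (k.factorial : ℂ)

/-- A grading-restricted vertex algebra structure on a complex vector space `V`,
presented via the projections `proj n` onto the weight spaces `V_(n)` and the
modes `mode u n = u_n` of the vertex operator `Y(u,x) = ∑ u_n x^{-n-1}`. -/
structure GRVertexAlgebra (V : Type) [AddCommGroup V] [Module ℂ V] : Type where
  /-- projection onto the weight-`n` subspace `V_(n)` -/
  proj : ℤ → V →ₗ[ℂ] V
  /-- `mode u n v = u_n v` -/
  mode : V → ℤ → V → V
  /-- the vacuum vector `𝟙` -/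
  one : V
  mode_add_left : ∀ (u u' : V) (n : ℤ) (v : V),
    mode (u + u') n v = mode u n v + mode u' n v
  mode_smul_left : ∀ (c : ℂ) (u : V) (n : ℤ) (v : V),
    mode (c • u) n v = c • mode u n v
  mode_add_right : ∀ (u : V) (n : ℤ) (v v' : V),
    mode u n (v + v') = mode u n v + mode u n v'
  mode_smul_right : ∀ (u : V) (n : ℤ) (c : ℂ) (v : V),
    mode u n (c • v) = c • mode u n v
  proj_idem : ∀ (m n : ℤ) (v : V), proj m (proj n v) = if m = n then proj n v else 0
  proj_support_finite : ∀ v : V, (Function.support fun n : ℤ => proj n v).Finite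
  proj_sum : ∀ v : V, (∑ᶠ n : ℤ, proj n v) = v
  /-- each weight space is finite dimensional -/
  grading_finite_dim : ∀ n : ℤ, FiniteDimensional ℂ (LinearMap.range (proj n))
  /-- the grading is bounded below -/
  grading_bounded_below : ∃ N : ℤ, ∀ n : ℤ, n < N → proj n = 0
  /-- lower truncation: `u_n v = 0` for `n` sufficiently large -/
  lower_trunc : ∀ u v : V, ∃ N : ℤ, ∀ n : ℤ, N ≤ n → mode u n v = 0
  /-- the vacuum is homogeneous of weight `0` -/
  one_homogeneous : proj 0 one = one
  /-- identity property `Y(𝟙,x) = 1` -/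
  identity_prop : ∀ (n : ℤ) (v : V), mode one n v = if n = -1 then v else 0
  /-- creation property, regular part -/
  creation : ∀ (u : V) (n : ℤ), 0 ≤ n → mode u n one = 0
  /-- creation property, constant term: `lim_{x→0} Y(u,x)𝟙 = u` -/
  creation_limit : ∀ u : V, mode u (-1) one = u
  /-- the Jacobi identity, in terms of modes -/
  jacobi : ∀ (a b c : V) (l m n : ℤ),
      (∑ᶠ i : ℕ, cchoose m i • mode (mode a (l + i) b) (m + n - i) c)
    = (∑ᶠ i : ℕ, ((-1 : ℂ) ^ (i : ℕ) * cchoose l i) • mode a (m + l - i) (mode b (n + i) c))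
      - (∑ᶠ i : ℕ, ((-1 : ℂ) ^ (l + i : ℤ) * cchoose l i) •
          mode b (n + l - i) (mode a (m + i) c))
  /-- `L(0)`-bracket formula, where `L(0) v = ∑ n • proj n v` -/
  L0_bracket : ∀ (a v : V) (n : ℤ),
      (∑ᶠ m : ℤ, (m : ℂ) • proj m (mode a n v)) - mode a n (∑ᶠ m : ℤ, (m : ℂ) • proj m v)
    = mode (∑ᶠ m : ℤ, (m : ℂ) • proj m a) n v + (-(n : ℂ) - 1) • mode a n v
  /-- `L(-1)`-derivative formula, where `L(-1) u = u_{-2} 𝟙`: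
  `Y(L(-1)u, x) = (d/dx) Y(u,x)` -/
  Lneg1_deriv : ∀ (u v : V) (n : ℤ),
      mode (mode u (-2) one) n v = (-(n : ℂ)) • mode u (n - 1) v
  /-- `L(-1)`-bracket formula: `[L(-1), Y(u,x)] = Y(L(-1)u, x)` -/
  Lneg1_bracket : ∀ (u v : V) (n : ℤ),
      mode (mode u n v) (-2) one - mode u n (mode v (-2) one)
    = mode (mode u (-2) one) n v

namespace GRVertexAlgebra

variable {V : Type} [AddCommGroup V] [Module ℂ V]

/-- The operator `L(0)`. -/
def L0op (VA : GRVertexAlgebra V) (v : V) : V := ∑ᶠ m : ℤ, (m : ℂ) • VA.proj m v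

/-- The operator `L(-1)`. -/
def Lneg1op (VA : GRVertexAlgebra V) (v : V) : V := VA.mode v (-2) VA.one

/-- `u` is homogeneous (of some weight). -/
def Homogeneous (VA : GRVertexAlgebra V) (u : V) : Prop := ∃ w : ℤ, VA.proj w u = u

lemma mode_zero_left (VA : GRVertexAlgebra V) (n : ℤ) (v : V) : VA.mode 0 n v = 0 := by
  simpa using VA.mode_smul_left 0 0 n v

lemma mode_zero_right (VA : GRVertexAlgebra V) (u : V) (n : ℤ) : VA.mode u n 0 = 0 := by
  simpa using VA.mode_smul_right u n 0 0

/-- `Res_x x^N (1+x)^{l + L(0)-weight} Y(u, x) v`, i.e. the residue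
`Res_x x^N (1+x)^l Y((1+x)^{L(0)} u, x) v`, expressed in terms of modes and the
homogeneous components of `u`. -/
def resPow (VA : GRVertexAlgebra V) (N l : ℤ) (u v : V) : V :=
  ∑ᶠ m : ℤ, ∑ᶠ i : ℕ, cchoose (l + m) i • VA.mode (VA.proj m u) (N + i) v

end GRVertexAlgebra

section UInf

variable (V : Type) [AddCommGroup V] [Module ℂ V]

/-- The space of column-finite `ℕ × ℕ` matrices with entries in `V`, as a submodule of
the space of all doubly indexed families. -/
def UInfSub : Submodule ℂ (ℕ → ℕ → V) where
  carrier := {A | ∀ l : ℕ, (Function.support fun k => A k l).Finite}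
  add_mem' := by
    intro A B hA hB l
    refine Set.Finite.subset ((hA l).union (hB l)) ?_
    intro k hk
    by_contra h
    simp only [Set.mem_union, Function.mem_support, not_or, not_not] at h
    exact hk (by simp [Pi.add_apply, h.1, h.2])
  zero_mem' := by
    intro l
    simp [Function.support]
  smul_mem' := by
    intro c A hA l
    refine Set.Finite.subset (hA l) ?_
    intro k hk
    by_contra h
    simp only [Function.mem_support, not_not] at h
    exact hk (by simp [Pi.smul_apply, h])

/-- `U^∞(V)`: column-finite `ℕ × ℕ` matrices with entries in `V`. -/
def UInf : Type := ↥(UInfSub V)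

instance : AddCommGroup (UInf V) := by unfold UInf; infer_instance
instance : Module ℂ (UInf V) := by unfold UInf; infer_instance

end UInf

namespace GRVertexAlgebra

variable {V : Type} [AddCommGroup V] [Module ℂ V]

/-- `[v]_{kl} = v ⊗ E_{kl}`, the matrix with entry `v` in position `(k,l)` and `0` elsewhere. -/
def Usingle (v : V) (k l : ℕ) : UInf V :=
  ⟨fun k' l' => if k' = k ∧ l' = l then v else 0, by
    intro l'
    refine Set.Finite.subset (Set.finite_singleton k) ?_
    intro k' hk'
    simp only [Function.mem_support] at hk'
    by_contra h
    simp only [Set.mem_singleton_iff] at h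
    exact hk' (by simp [h])⟩

/-- The `(k,l)` entry of the product `[u]_{kn} ⋄ [v]_{nl}`:
`∑_{m=0}^{n} C(-k+n-l-1, m) Res_x x^{-k+n-l-m-1} (1+x)^l Y((1+x)^{L(0)} u, x) v`. -/
def diamondEntry (VA : GRVertexAlgebra V) (u v : V) (k n l : ℕ) : V :=
  ∑ m ∈ Finset.range (n + 1),
    cchoose (-(k : ℤ) + n - l - 1) m • VA.resPow (-(k : ℤ) + n - l - m - 1) l u v

lemma resPow_zero_left (VA : GRVertexAlgebra V) (N l : ℤ) (v : V) :
    VA.resPow N l 0 v = 0 := by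
  unfold GRVertexAlgebra.resPow
  have h : ∀ m : ℤ, (∑ᶠ i : ℕ, cchoose (l + m) i • VA.mode (VA.proj m (0 : V)) (N + i) v) = 0 := by
    intro m
    have : ∀ i : ℕ, cchoose (l + m) i • VA.mode (VA.proj m (0 : V)) (N + i) v = 0 := by
      intro i
      rw [map_zero, VA.mode_zero_left]
      simp
    simp only [this]
    exact finsum_zero
  simp only [h]
  exact finsum_zero

lemma resPow_zero_right (VA : GRVertexAlgebra V) (N l : ℤ) (u : V) :
    VA.resPow N l u 0 = 0 := by
  unfold GRVertexAlgebra.resPow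
  have h : ∀ m : ℤ, (∑ᶠ i : ℕ, cchoose (l + m) i • VA.mode (VA.proj m u) (N + i) (0 : V)) = 0 := by
    intro m
    have : ∀ i : ℕ, cchoose (l + m) i • VA.mode (VA.proj m u) (N + i) (0 : V) = 0 := by
      intro i
      rw [VA.mode_zero_right]
      simp
    simp only [this]
    exact finsum_zero
  simp only [h]
  exact finsum_zero

lemma diamondEntry_zero_left (VA : GRVertexAlgebra V) (v : V) (k n l : ℕ) :
    VA.diamondEntry 0 v k n l = 0 := by
  unfold GRVertexAlgebra.diamondEntry
  simp [VA.resPow_zero_left]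

lemma diamondEntry_zero_right (VA : GRVertexAlgebra V) (u : V) (k n l : ℕ) :
    VA.diamondEntry u 0 k n l = 0 := by
  unfold GRVertexAlgebra.diamondEntry
  simp [VA.resPow_zero_right]

/-- The product `⋄` on `U^∞(V)`. -/
def udiamond (VA : GRVertexAlgebra V) (A B : UInf V) : UInf V :=
  ⟨fun k l => ∑ᶠ n : ℕ, VA.diamondEntry (A.1 k n) (B.1 n l) k n l, by
    intro l
    refine Set.Finite.subset
      (Set.Finite.biUnion (B.2 l) (fun n _ => A.2 n)) ?_
    intro k hk
    simp only [Function.mem_support] at hk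
    by_contra h
    apply hk
    have hterm : ∀ n : ℕ, VA.diamondEntry (A.1 k n) (B.1 n l) k n l = 0 := by
      intro n
      by_cases hB : B.1 n l = 0
      · rw [hB]; exact VA.diamondEntry_zero_right _ _ _ _
      · have hA : A.1 k n = 0 := by
          by_contra hA
          exact h (Set.mem_biUnion (by exact hB) (by exact hA))
        rw [hA]; exact VA.diamondEntry_zero_left _ _ _ _
    simp only [hterm]
    exact finsum_zero⟩

end GRVertexAlgebra
/-- A lower-bounded generalized module for a grading-restricted vertex algebra,
presented via the mode action `wmode`, the projections `wproj μ` onto the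
(generalized-eigenvalue) weight spaces `W_(μ)`, and the operators `L_W(0)`, `L_W(-1)`. -/
structure LBGModule {V : Type} [AddCommGroup V] [Module ℂ V]
    (VA : GRVertexAlgebra V) (W : Type) [AddCommGroup W] [Module ℂ W] : Type where
  /-- `wmode u n w = u_n w`, the modes of `Y_W(u,x) = ∑ u_n x^{-n-1}` -/
  wmode : V → ℤ → W → W
  /-- projection onto the weight-`μ` subspace `W_(μ)` -/
  wproj : ℂ → W →ₗ[ℂ] W
  /-- the operator `L_W(0)` -/
  LW0 : W →ₗ[ℂ] W
  /-- the operator `L_W(-1)` -/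
  LW1 : W →ₗ[ℂ] W
  wmode_add_left : ∀ (u u' : V) (n : ℤ) (w : W),
    wmode (u + u') n w = wmode u n w + wmode u' n w
  wmode_smul_left : ∀ (c : ℂ) (u : V) (n : ℤ) (w : W),
    wmode (c • u) n w = c • wmode u n w
  wmode_add_right : ∀ (u : V) (n : ℤ) (w w' : W),
    wmode u n (w + w') = wmode u n w + wmode u n w'
  wmode_smul_right : ∀ (u : V) (n : ℤ) (c : ℂ) (w : W),
    wmode u n (c • w) = c • wmode u n w
  wproj_idem : ∀ (μ ν : ℂ) (w : W), wproj μ (wproj ν w) = if μ = ν then wproj ν w else 0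
  wproj_support_finite : ∀ w : W, (Function.support fun μ : ℂ => wproj μ w).Finite
  wproj_sum : ∀ w : W, (∑ᶠ μ : ℂ, wproj μ w) = w
  /-- the grading is bounded below in real part -/
  grading_bounded_below : ∃ B : ℝ, ∀ μ : ℂ, μ.re < B → wproj μ = 0
  /-- lower truncation -/
  lower_trunc : ∀ (u : V) (w : W), ∃ N : ℤ, ∀ n : ℤ, N ≤ n → wmode u n w = 0
  /-- identity property `Y_W(𝟙,x) = 1` -/
  identity_prop : ∀ (n : ℤ) (w : W), wmode VA.one n w = if n = -1 then w else 0
  /-- the Jacobi identity for the module -/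
  jacobi : ∀ (a b : V) (w : W) (l m n : ℤ),
      (∑ᶠ i : ℕ, cchoose m i • wmode (VA.mode a (l + i) b) (m + n - i) w)
    = (∑ᶠ i : ℕ, ((-1 : ℂ) ^ (i : ℕ) * cchoose l i) • wmode a (m + l - i) (wmode b (n + i) w))
      - (∑ᶠ i : ℕ, ((-1 : ℂ) ^ (l + i : ℤ) * cchoose l i) •
          wmode b (n + l - i) (wmode a (m + i) w))
  /-- `W_(μ)` is the generalized eigenspace of `L_W(0)` with eigenvalue `μ` -/
  gen_eigenspace : ∀ (μ : ℂ) (w : W),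
    ∃ k : ℕ, (((LW0 - μ • LinearMap.id : Module.End ℂ W) ^ k) : W →ₗ[ℂ] W) (wproj μ w) = 0
  gen_eigenspace_mem : ∀ (μ : ℂ) (w : W),
    (∃ k : ℕ, (((LW0 - μ • LinearMap.id : Module.End ℂ W) ^ k) : W →ₗ[ℂ] W) w = 0) → wproj μ w = w
  /-- `L_W(0)`-bracket formula -/
  LW0_bracket : ∀ (a : V) (w : W) (n : ℤ),
      LW0 (wmode a n w) - wmode a n (LW0 w)
    = wmode (∑ᶠ m : ℤ, (m : ℂ) • VA.proj m a) n w + (-(n : ℂ) - 1) • wmode a n w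
  /-- `L_W(-1)`-derivative formula: `Y_W(L(-1)u, x) = (d/dx) Y_W(u,x)` -/
  LW1_deriv : ∀ (u : V) (w : W) (n : ℤ),
      wmode (VA.mode u (-2) VA.one) n w = (-(n : ℂ)) • wmode u (n - 1) w
  /-- `L_W(-1)`-bracket formula -/
  LW1_bracket : ∀ (u : V) (w : W) (n : ℤ),
      LW1 (wmode u n w) - wmode u n (LW1 w) = wmode (VA.mode u (-2) VA.one) n w

namespace LBGModule

variable {V : Type} [AddCommGroup V] [Module ℂ V] {VA : GRVertexAlgebra V}
variable {W : Type} [AddCommGroup W] [Module ℂ W]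

lemma wmode_zero_left (M : LBGModule VA W) (n : ℤ) (w : W) : M.wmode 0 n w = 0 := by
  simpa using M.wmode_smul_left 0 0 n w

lemma wmode_zero_right (M : LBGModule VA W) (u : V) (n : ℤ) : M.wmode u n 0 = 0 := by
  simpa using M.wmode_smul_right u n 0 0

/-- `Ω_n(W) = {w ∈ W : v_k w = 0 for homogeneous v with wt v - k - 1 < -n}`
(for `n < 0` this is automatically `{0}`, matching `Ω_{-1}(W) = 0`). -/
def OmegaSet (M : LBGModule VA W) (n : ℤ) : Set W :=
  {w : W | ∀ (m k : ℤ) (v : V), m - k - 1 < -n → M.wmode (VA.proj m v) k w = 0}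

/-- `ϑ_{Gr(W)}([v]_{kl})` applied to a representative `w`:
`Res_x x^{l-k-1} Y_W(x^{L(0)} v, x) w`. -/
def wAct (M : LBGModule VA W) (v : V) (k l : ℕ) (w : W) : W :=
  ∑ᶠ m : ℤ, M.wmode (VA.proj m v) ((l : ℤ) - (k : ℤ) - 1 + m) w

end LBGModule

namespace GRVertexAlgebra

variable {V : Type} [AddCommGroup V] [Module ℂ V]

/-- Membership in `Q^∞(V)`: `A` acts as zero on `Gr(W)` for every lower-bounded
generalized `V`-module `W`.  Here the action of `A` on `[w]_n ∈ Gr_n(W)` has component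
`[ϑ([A_{kn}]_{kn}) w]_k` in `Gr_k(W)`, which vanishes in `Gr_k(W) = Ω_k(W)/Ω_{k-1}(W)`
exactly when the representative lies in `Ω_{k-1}(W)`. -/
def memQ (VA : GRVertexAlgebra V) (A : UInf V) : Prop :=
  ∀ (W : Type) (_ : AddCommGroup W) (_ : Module ℂ W) (M : LBGModule VA W)
    (n k : ℕ) (w : W), w ∈ M.OmegaSet n →
      M.wAct (A.1 k n) k n w ∈ M.OmegaSet ((k : ℤ) - 1)

/-- The generators of `O^∞_∘(V)` living in position `(k,l)`:
`Res_x x^{-k-l-p-2} (1+x)^l Y((1+x)^{L(0)} u, x) v`. -/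
def circExpr (VA : GRVertexAlgebra V) (u v : V) (k l p : ℕ) : V :=
  VA.resPow (-(k : ℤ) - l - p - 2) l u v

/-- Membership in `O^∞_∘(V)`: each entry of `A` is a (finite) linear combination of the
generators `Res_x x^{-k-l-p-2} (1+x)^l [Y((1+x)^{L(0)} u, x) v]_{kl}`; since each generator
is concentrated in a single position `(k,l)`, an infinite linear combination in which each
pair `(k,l)` appears only finitely many times is exactly a column-finite matrix each of whose
entries lies in the corresponding span. -/
def memOcirc (VA : GRVertexAlgebra V) (A : UInf V) : Prop :=
  ∀ k l : ℕ, A.1 k l ∈ Submodule.span ℂ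
    {x : V | ∃ (u v : V) (p : ℕ), x = VA.circExpr u v k l p}

/-- The element `(L(-1) + L(0) + l - k) v`. -/
def LLExpr (VA : GRVertexAlgebra V) (k l : ℕ) (v : V) : V :=
  VA.Lneg1op v + VA.L0op v + (((l : ℂ) - (k : ℂ)) • v)

/-- Membership in `O^∞(V)`. -/
def memO (VA : GRVertexAlgebra V) (A : UInf V) : Prop :=
  ∀ k l : ℕ, A.1 k l ∈ Submodule.span ℂ
    ({x : V | ∃ (u v : V) (p : ℕ), x = VA.circExpr u v k l p}
      ∪ {x : V | ∃ v : V, x = VA.LLExpr k l v})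

end GRVertexAlgebra
namespace GRVertexAlgebra

variable {V : Type} [AddCommGroup V] [Module ℂ V]

/-- Huang's Jacobi-identity element of `U^∞(V)` attached to `u, v ∈ V` with `v`
homogeneous of weight `wtv`, and integers `k ∈ ℕ`, `l, p, n ∈ ℤ` with `l + p ∈ ℕ`:
`∑_{j, n+p-j ≥ 0} (-1)^j C(p,j) [v]_{k,n+p-j} ⋄ [u]_{n+p-j,l+p}`
`- ∑_{j, l-n+k+p-j ≥ 0} (-1)^{p-j} C(p,j) [u]_{k,l-n+k+p-j} ⋄ [v]_{l-n+k+p-j,l+p}`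
`- ∑_{j ∈ ℕ} C(wt v + n - k - 1, j) [v_{p+j} u]_{k,l+p}`. -/
def jElt (VA : GRVertexAlgebra V) (u v : V) (wtv : ℤ) (k : ℕ) (l p n : ℤ) : UInf V :=
  (∑ᶠ j : ℕ, if (j : ℤ) ≤ n + p then
      ((-1 : ℂ) ^ (j : ℕ) * cchoose p j) •
        VA.udiamond (Usingle v k (n + p - j).toNat)
          (Usingle u (n + p - j).toNat (l + p).toNat)
    else 0)
  - (∑ᶠ j : ℕ, if (j : ℤ) ≤ l - n + (k : ℤ) + p then
      ((-1 : ℂ) ^ ((p : ℤ) - (j : ℤ)) * cchoose p j) •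
        VA.udiamond (Usingle u k (l - n + (k : ℤ) + p - j).toNat)
          (Usingle v (l - n + (k : ℤ) + p - j).toNat (l + p).toNat)
    else 0)
  - Usingle (∑ᶠ j : ℕ, cchoose (wtv + n - (k : ℤ) - 1) j • VA.mode v (p + j) u)
      k (l + p).toNat

/-- The `(k, l+p)` entry of the Jacobi-identity element `jElt`, written out in terms of
residues as in the paper. -/
def jEntry (VA : GRVertexAlgebra V) (u v : V) (wtv : ℤ) (k : ℕ) (l p n : ℤ) : V :=
  (∑ᶠ j : ℕ, if (j : ℤ) ≤ n + p then
      ((-1 : ℂ) ^ (j : ℕ) * cchoose p j) •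
        VA.diamondEntry v u k (n + p - j).toNat (l + p).toNat
    else 0)
  - (∑ᶠ j : ℕ, if (j : ℤ) ≤ l - n + (k : ℤ) + p then
      ((-1 : ℂ) ^ ((p : ℤ) - (j : ℤ)) * cchoose p j) •
        VA.diamondEntry u v k (l - n + (k : ℤ) + p - j).toNat (l + p).toNat
    else 0)
  - (∑ᶠ j : ℕ, cchoose (wtv + n - (k : ℤ) - 1) j • VA.mode v (p + j) u)

/-- The set of generating elements of `J^∞(V)`. -/
def JSet (VA : GRVertexAlgebra V) : Set (UInf V) :=
  {A : UInf V | ∃ (u v : V) (wtv : ℤ) (k : ℕ) (l p n : ℤ),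
    VA.proj wtv v = v ∧ 0 ≤ l + p ∧ A = VA.jElt u v wtv k l p n}

/-- The set `O^∞(V)` of Huang, as a subset of `U^∞(V)`. -/
def OSet (VA : GRVertexAlgebra V) : Set (UInf V) := {A : UInf V | VA.memO A}

end GRVertexAlgebra

/-- A vertex operator algebra: a grading-restricted vertex algebra together with a
conformal vector `ω` whose modes `L(n) = ω_{n+1}` give a representation of the Virasoro
algebra, recover the grading operator `L(0)`, and satisfy the `L(-1)`-property. -/
structure VertexOperatorAlgebra (V : Type) [AddCommGroup V] [Module ℂ V]
    extends GRVertexAlgebra V : Type where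
  /-- the conformal vector -/
  omega : V
  /-- the central charge -/
  centralCharge : ℂ
  /-- the Virasoro relations for `L(n) = ω_{n+1}` -/
  virasoro : ∀ (m n : ℤ) (v : V),
      mode omega (m + 1) (mode omega (n + 1) v) - mode omega (n + 1) (mode omega (m + 1) v)
    = ((m : ℂ) - (n : ℂ)) • mode omega (m + n + 1) v
      + (if m + n = 0 then (((m ^ 3 - m : ℤ) : ℂ) / 12) * centralCharge else 0) • v
  /-- `L(0) = ω_1` is the grading operator -/
  omega_L0 : ∀ v : V, mode omega 1 v = ∑ᶠ m : ℤ, (m : ℂ) • proj m v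
  /-- `L(-1) = ω_0` -/
  omega_Lneg1 : ∀ v : V, mode omega 0 v = mode v (-2) one

namespace GRVertexAlgebra

variable {V : Type} [AddCommGroup V] [Module ℂ V]

/-- The circle product `u ∘_n v = Res_x (1+x)^{wt u + n} Y(u,x) v / x^{2n+2}`
(for `u` homogeneous; `resPow` inserts the weight of each homogeneous component). -/
def circN (VA : GRVertexAlgebra V) (n : ℕ) (u v : V) : V :=
  VA.resPow (-(2 * (n : ℤ)) - 2) n u v

/-- The subspace `O_n(V)`, spanned by the `u ∘_n v` for homogeneous `u` and all `v`, and
by the `(L(-1) + L(0)) v`. -/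
def ZhuO (VA : GRVertexAlgebra V) (n : ℕ) : Submodule ℂ V :=
  Submodule.span ℂ
    ({x : V | ∃ u v : V, VA.Homogeneous u ∧ x = VA.circN n u v}
      ∪ {x : V | ∃ v : V, x = VA.Lneg1op v + VA.L0op v})

/-- The product `u *_n v` of Dong–Li–Mason (for `u` homogeneous, extended linearly):
`∑_{m=0}^{n} (-1)^m C(m+n, n) Res_x (1+x)^{wt u + n} Y(u,x) v / x^{n+m+1}`. -/
def starN (VA : GRVertexAlgebra V) (n : ℕ) (u v : V) : V :=
  ∑ m ∈ Finset.range (n + 1),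
    ((-1 : ℂ) ^ (m : ℕ) * ((m + n).choose n : ℂ)) •
      VA.resPow (-(n : ℤ) - m - 1) n u v

end GRVertexAlgebra

/-- The monomial `α(-i_1) ⋯ α(-i_j) 𝟙` of the rank one Heisenberg vertex operator algebra,
indexed by the multiset `{i_1, …, i_j}` of positive integers; here `a = α(-1)𝟙` so that
`α(m) = a_m`. -/
def heisMono {V : Type} [AddCommGroup V] [Module ℂ V]
    (VA : GRVertexAlgebra V) (a : V) (μ : Multiset ℕ+) : V :=
  (μ.sort (· ≤ ·)).foldr (fun i v => VA.mode a (-(i : ℤ)) v) VA.one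

/-- The rank one Heisenberg vertex operator algebra `M(1)`: a vertex operator algebra
with a weight-one element `a = α(-1)𝟙` whose modes `α(m) = a_m` satisfy the rank one
Heisenberg relations (with the central element acting as `1`), such that the monomials
`α(-i_1) ⋯ α(-i_j) 𝟙` form a basis, and with conformal vector `ω = (1/2) α(-1)² 𝟙`
of central charge `1`. -/
structure HeisenbergVOA (V : Type) [AddCommGroup V] [Module ℂ V]
    extends VertexOperatorAlgebra V : Type where
  /-- the element `a = α(-1)𝟙` -/
  a : V
  /-- `α(-1)𝟙` is homogeneous of weight one -/
  a_wt : proj 1 a = a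
  /-- the Heisenberg commutation relations `[α(m), α(n)] = m δ_{m+n,0}` (`c` acts as `1`) -/
  heis_comm : ∀ (m n : ℤ) (v : V),
      mode a m (mode a n v) - mode a n (mode a m v)
    = if m + n = 0 then (m : ℂ) • v else 0
  /-- `M(1) ≃ S(ĥ⁻)` linearly: the monomials `α(-i_1)⋯α(-i_j)𝟙` form a basis -/
  basis : Module.Basis (Multiset ℕ+) ℂ V
  basis_eq : ∀ μ : Multiset ℕ+, basis μ = heisMono toGRVertexAlgebra a μ
  omega_eq : omega = (1 / 2 : ℂ) • mode a (-1) a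
  centralCharge_eq : centralCharge = 1

namespace HeisenbergVOA

variable {V : Type} [AddCommGroup V] [Module ℂ V]

/-- The element
`D_n = [α(-1)𝟙]_{nn} ⋄ [α(-1)𝟙]_{nn} - [α(-1)²𝟙]_{nn} + 2n [𝟙]_{nn}` of `U^∞(M(1))`. -/
def Delt (H : HeisenbergVOA V) (n : ℕ) : UInf V :=
  H.udiamond (GRVertexAlgebra.Usingle H.a n n) (GRVertexAlgebra.Usingle H.a n n)
    - GRVertexAlgebra.Usingle (H.mode H.a (-1) H.a) n n
    + (2 * (n : ℂ)) • GRVertexAlgebra.Usingle H.one n n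

end HeisenbergVOA

namespace LBGModule

variable {V : Type} [AddCommGroup V] [Module ℂ V]
variable {W : Type} [AddCommGroup W] [Module ℂ W]

/-- `Ω(W) = {w ∈ W : α(n) w = 0 for all n > 0}` for a module `W` over the rank one
Heisenberg vertex operator algebra. -/
def smallOmega (H : HeisenbergVOA V) (M : LBGModule H.toGRVertexAlgebra W) :
    Submodule ℂ W where
  carrier := {w : W | ∀ n : ℤ, 0 < n → M.wmode H.a n w = 0}
  add_mem' := by
    intro w w' hw hw' n hn
    rw [M.wmode_add_right, hw n hn, hw' n hn, add_zero]
  zero_mem' := fun n _ => M.wmode_zero_right H.a n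
  smul_mem' := by
    intro c w hw n hn
    rw [M.wmode_smul_right, hw n hn, smul_zero]

end LBGModule
section Aux

lemma cchoose_zero' (m : ℤ) : cchoose m 0 = 1 := by simp [cchoose]

lemma cchoose_pascal (m : ℤ) (k : ℕ) :
    cchoose (m + 1) (k + 1) = cchoose m (k + 1) + cchoose m k := by
  unfold cchoose
  rw [Finset.prod_range_succ', Finset.prod_range_succ]
  have h1 : (∏ i ∈ Finset.range k, (((m + 1 : ℤ) : ℂ) - ((i + 1 : ℕ) : ℂ)))
      = ∏ i ∈ Finset.range k, ((m : ℂ) - (i : ℂ)) := by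
    refine Finset.prod_congr rfl fun i _ => ?_
    push_cast; ring
  rw [h1]
  have h2 : ((k+1).factorial : ℂ) = ((k:ℂ)+1) * (k.factorial : ℂ) := by
    rw [Nat.factorial_succ]; push_cast; ring
  rw [h2]
  have hk : (k.factorial : ℂ) ≠ 0 := Nat.cast_ne_zero.2 (Nat.factorial_ne_zero k)
  have hk1 : ((k:ℂ)+1) ≠ 0 := Nat.cast_add_one_ne_zero k
  field_simp
  push_cast
  ring

variable {V : Type} [AddCommGroup V] [Module ℂ V]

lemma sum_pascal_shift (x : ℤ) (f : ℕ → V) (M : ℕ) :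
    ∑ j ∈ Finset.range (M+1), cchoose (x+1) j • f j
      = ∑ j ∈ Finset.range (M+1), cchoose x j • f j
        + ∑ j ∈ Finset.range M, cchoose x j • f (j+1) := by
  induction M with
  | zero => simp [cchoose_zero']
  | succ M ih =>
    rw [Finset.sum_range_succ (f := fun j => cchoose (x+1) j • f j) (n := M+1),
        Finset.sum_range_succ (f := fun j => cchoose x j • f j) (n := M+1),
        Finset.sum_range_succ (f := fun j => cchoose x j • f (j+1)) (n := M),
        ih, cchoose_pascal]
    simp only [add_smul]
    abel

lemma sum_diff_lemma (x : ℤ) (f : ℕ → V) (i : ℕ) :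
    ∑ m ∈ Finset.range i, cchoose (x+1) m • f m
      - ∑ m ∈ Finset.range (i+1), cchoose x m • (f (m+1) + f m)
    = (-(cchoose (x+1) i)) • f i + (-(cchoose x i)) • f (i+1) := by
  induction i with
  | zero => simp [cchoose_zero']
  | succ i ih =>
    rw [Finset.sum_range_succ (f := fun m => cchoose (x+1) m • f m),
        Finset.sum_range_succ (f := fun m => cchoose x m • (f (m+1) + f m))]
    have h : ∀ a b c d : V, (a + c) - (b + d) = (a - b) + (c - d) := by
      intro a b c d; abel
    rw [h, ih, cchoose_pascal]
    simp only [neg_smul, add_smul, smul_add]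
    abel

end Aux

namespace GRVertexAlgebra

variable {V : Type} [AddCommGroup V] [Module ℂ V]

lemma resPow_succ (VA : GRVertexAlgebra V) (N l : ℤ) (u v : V) :
    VA.resPow N (l+1) u v = VA.resPow N l u v + VA.resPow (N+1) l u v := by
  unfold GRVertexAlgebra.resPow
  have hsupp : ∀ (N' l' : ℤ),
      (Function.support fun m : ℤ =>
        ∑ᶠ j : ℕ, cchoose (l' + m) j • VA.mode (VA.proj m u) (N' + j) v).Finite := by
    intro N' l'
    refine Set.Finite.subset (VA.proj_support_finite u) ?_
    intro m hm
    simp only [Function.mem_support] at hm ⊢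
    intro h0
    apply hm
    simp [h0, VA.mode_zero_left]
  rw [← finsum_add_distrib (hsupp N l) (hsupp (N+1) l)]
  refine finsum_congr fun m => ?_
  obtain ⟨Nt, hNt⟩ := VA.lower_trunc (VA.proj m u) v
  have hM : ∀ j : ℕ, (Nt - N).toNat ≤ j → ∀ N' : ℤ, N ≤ N' → VA.mode (VA.proj m u) (N' + j) v = 0 := by
    intro j hj N' hN'
    apply hNt
    omega
  set M : ℕ := (Nt - N).toNat
  have conv : ∀ (c : ℕ → ℂ) (N' : ℤ), N ≤ N' →
      (∑ᶠ j : ℕ, c j • VA.mode (VA.proj m u) (N' + j) v)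
        = ∑ j ∈ Finset.range (M+1), c j • VA.mode (VA.proj m u) (N' + j) v := by
    intro c N' hN'
    apply finsum_eq_finset_sum_of_support_subset
    intro j hj
    simp only [Function.mem_support] at hj
    simp only [Finset.coe_range, Set.mem_Iio]
    by_contra h
    exact hj (by rw [hM j (by omega) N' hN']; simp)
  have e1 : ∀ j : ℕ, cchoose (l + 1 + m) j = cchoose ((l + m) + 1) j := by
    intro j; congr 1; ring
  simp only [e1]
  rw [conv (fun j => cchoose ((l+m)+1) j) N le_rfl, conv (fun j => cchoose (l+m) j) N le_rfl,
      conv (fun j => cchoose (l+m) j) (N+1) (by omega)]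
  rw [sum_pascal_shift (l+m) (fun j => VA.mode (VA.proj m u) (N + j) v) M]
  congr 1
  rw [Finset.sum_range_succ]
  have hrw : ∀ j : ℕ, VA.mode (VA.proj m u) (N + 1 + (j:ℤ)) v = VA.mode (VA.proj m u) (N + ((j+1:ℕ):ℤ)) v := by
    intro j; congr 1; push_cast; ring
  simp only [hrw]
  rw [hM (M+1) (by omega) N le_rfl, smul_zero, add_zero]

lemma udiamond_single (VA : GRVertexAlgebra V) (u v : V) (k i l : ℕ) :
    VA.udiamond (Usingle u k i) (Usingle v i l)
      = Usingle (VA.diamondEntry u v k i l) k l := by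
  apply Subtype.ext
  funext k' l'
  show (∑ᶠ n : ℕ, VA.diamondEntry ((Usingle u k i).1 k' n) ((Usingle v i l).1 n l') k' n l')
      = (Usingle (VA.diamondEntry u v k i l) k l).1 k' l'
  rw [finsum_eq_single _ i]
  · simp only [Usingle]
    by_cases hk : k' = k
    · by_cases hl : l' = l
      · simp [hk, hl]
      · simp [hk, hl, VA.diamondEntry_zero_right]
    · simp [hk, VA.diamondEntry_zero_left]
  · intro n hn
    have : (Usingle v i l).1 n l' = 0 := by
      simp only [Usingle]
      rw [if_neg]
      rintro ⟨h1, -⟩; exact hn h1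
    rw [this, VA.diamondEntry_zero_right]

lemma entry_diff (VA : GRVertexAlgebra V) (u v : V) (i k l : ℕ)
    (hi : 1 ≤ i) (hk : 1 ≤ k) (hl : 1 ≤ l) :
    VA.diamondEntry u v (k-1) (i-1) (l-1) - VA.diamondEntry u v k i l
      = (-(cchoose (-(k:ℤ)+i-l) i)) • VA.circExpr u v (k-1) (l-1) 0
        + (-(cchoose (-(k:ℤ)+i-l-1) i)) • VA.circExpr u v (k-1) (l-1) 1 := by
  set x : ℤ := -(k:ℤ) + i - l - 1 with hx
  set f : ℕ → V := fun m => VA.resPow (x + 1 - m) ((l:ℤ) - 1) u v with hf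
  have hkc : ((k-1:ℕ) : ℤ) = (k:ℤ) - 1 := by omega
  have hic : ((i-1:ℕ) : ℤ) = (i:ℤ) - 1 := by omega
  have hlc : ((l-1:ℕ) : ℤ) = (l:ℤ) - 1 := by omega
  have eA : VA.diamondEntry u v (k-1) (i-1) (l-1)
      = ∑ m ∈ Finset.range i, cchoose (x+1) m • f m := by
    unfold GRVertexAlgebra.diamondEntry
    rw [Nat.sub_add_cancel hi]
    refine Finset.sum_congr rfl fun m _ => ?_
    rw [hkc, hic, hlc]
    have h1 : -((k:ℤ)-1) + ((i:ℤ)-1) - ((l:ℤ)-1) - 1 = x + 1 := by rw [hx]; ring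
    have h2 : -((k:ℤ)-1) + ((i:ℤ)-1) - ((l:ℤ)-1) - m - 1 = x + 1 - m := by rw [hx]; ring
    rw [h1, h2]
  have eB : VA.diamondEntry u v k i l
      = ∑ m ∈ Finset.range (i+1), cchoose x m • (f (m+1) + f m) := by
    unfold GRVertexAlgebra.diamondEntry
    refine Finset.sum_congr rfl fun m _ => ?_
    have h1 : -(k:ℤ) + i - l - 1 = x := by rw [hx]
    have h2 : -(k:ℤ) + i - l - m - 1 = x - m := by rw [hx]; ring
    rw [h1, h2]
    congr 1
    have h3 : (l:ℤ) = ((l:ℤ) - 1) + 1 := by ring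
    rw [h3, VA.resPow_succ (x - m) ((l:ℤ)-1) u v]
    have h5 : x - (m:ℤ) + 1 = x + 1 - m := by ring
    have h4 : x - (m:ℤ) = x + 1 - ((m+1:ℕ) : ℤ) := by push_cast; ring
    rw [h5, h4]
  rw [eA, eB, sum_diff_lemma x f i]
  have hc1 : VA.circExpr u v (k-1) (l-1) 0 = f i := by
    unfold GRVertexAlgebra.circExpr
    rw [hkc, hlc, hf]
    congr 1
    rw [hx]; push_cast; ring
  have hc2 : VA.circExpr u v (k-1) (l-1) 1 = f (i+1) := by
    unfold GRVertexAlgebra.circExpr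
    rw [hkc, hlc, hf]
    congr 1
    rw [hx]; push_cast; ring
  rw [hc1, hc2]
  have hx1 : x + 1 = -(k:ℤ) + i - l := by rw [hx]; ring
  rw [hx1, hx]

end GRVertexAlgebra

open GRVertexAlgebra in
/-- Let `V` be a grading-restricted vertex algebra, `u, v ∈ V`, and `i, k, l ≥ 1`.  With
`w = ∑_{m=0}^{i} C(-k+i-l-1, m) Res_x x^{-k+i-l-m-1} (1+x)^l Y((1+x)^{L(0)} u, x) v`,
so that `[u]_{ki} ⋄ [v]_{il} = [w]_{kl}`, one has
`[u]_{k-1,i-1} ⋄ [v]_{i-1,l-1} - [w]_{k-1,l-1} ∈ O^∞_∘(V)`. -/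
theorem diamond_shift_mod_Ocirc {V : Type} [AddCommGroup V] [Module ℂ V]
    (VA : GRVertexAlgebra V) (u v : V) (i k l : ℕ)
    (hi : 1 ≤ i) (hk : 1 ≤ k) (hl : 1 ≤ l) :
    VA.udiamond (Usingle u k i) (Usingle v i l)
      = Usingle (VA.diamondEntry u v k i l) k l ∧
    VA.memOcirc (VA.udiamond (Usingle u (k - 1) (i - 1)) (Usingle v (i - 1) (l - 1))
      - Usingle (VA.diamondEntry u v k i l) (k - 1) (l - 1)) := by
  constructor
  · exact VA.udiamond_single u v k i l
  · rw [VA.udiamond_single u v (k-1) (i-1) (l-1)]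
    unfold GRVertexAlgebra.memOcirc
    intro k' l'
    have hval : (Usingle (VA.diamondEntry u v (k-1) (i-1) (l-1)) (k-1) (l-1)
        - Usingle (VA.diamondEntry u v k i l) (k-1) (l-1)).1 k' l'
      = (if k' = k-1 ∧ l' = l-1 then VA.diamondEntry u v (k-1) (i-1) (l-1) else 0)
        - (if k' = k-1 ∧ l' = l-1 then VA.diamondEntry u v k i l else 0) := rfl
    rw [hval]
    by_cases hc : k' = k-1 ∧ l' = l-1
    · obtain ⟨h1, h2⟩ := hc
      subst h1; subst h2
      rw [if_pos ⟨rfl, rfl⟩, if_pos ⟨rfl, rfl⟩, VA.entry_diff u v i k l hi hk hl]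
      refine Submodule.add_mem _ ?_ ?_
      · exact Submodule.smul_mem _ _ (Submodule.subset_span ⟨u, v, 0, rfl⟩)
      · exact Submodule.smul_mem _ _ (Submodule.subset_span ⟨u, v, 1, rfl⟩)
    · rw [if_neg hc, if_neg hc, sub_zero]
      exact Submodule.zero_mem _
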